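/- Let U ⊆ ℂ be open, E a complex Banach space, and f : U → E a function such that for every continuous linear functional λ ∈ E*, the composition λ ∘ f is holomorphic on U, and f is locally bounded. Suppose further that there is a countable set X, a weight φ : X → ℝ_{>0}, E = l_{1,φ}(X), and for each y ∈ X the coordinate function z ↦ f(z)(y) is holomorphic on U. If sup_{z∈U} ‖f(z)‖_{1,φ} < ∞, then f : U → l_{1,φ}(X) is holomorphic (i.e., Fréchet differentiable as a Banach-space-valued map). -/

import Mathlib

open Metric Real Complex Set MeasureTheory


/-- Let `U ⊆ ℂ` be open and `f : U → l_{1,φ}(X)` (represented coordinatewise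
as `f : ℂ → X → ℂ`) be such that each coordinate `z ↦ f z y` is holomorphic on `U` and
`sup_{z ∈ U} ‖f z‖_{1,φ} < ∞`. Then `f` is holomorphic as an `l_{1,φ}(X)`-valued map,
i.e., at each `z ∈ U` it is complex (Fréchet) differentiable in the `l_{1,φ}` norm. -/
theorem stmt7 {X : Type*} [Countable X] (φ : X → ℝ) (hφ : ∀ x, 0 < φ x)
    (U : Set ℂ) (hU : IsOpen U) (f : ℂ → X → ℂ)
    (hol : ∀ y : X, DifferentiableOn ℂ (fun z => f z y) U)
    (hsum : ∀ z ∈ U, Summable (fun y => ‖f z y‖ * φ y))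
    (K : ℝ) (hK : ∀ z ∈ U, (∑' y, ‖f z y‖ * φ y) ≤ K) :
    ∀ z ∈ U, ∃ g : X → ℂ, Summable (fun y => ‖g y‖ * φ y) ∧
      Filter.Tendsto
        (fun w => (∑' y, ‖f w y - f z y - (w - z) * g y‖ * φ y) / ‖w - z‖)
        (nhdsWithin z {z}ᶜ) (nhds 0) := by
  intro z hz
  obtain ⟨r, hr0, hrU⟩ : ∃ r > 0, Metric.closedBall z r ⊆ U := by
    rcases Metric.isOpen_iff.1 hU z hz with ⟨ε, hε, hball⟩
    exact ⟨ε/2, by linarith, (Metric.closedBall_subset_ball (by linarith)).trans hball⟩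
  have hmemU : ∀ θ : ℝ, circleMap z r θ ∈ U := fun θ =>
    hrU (circleMap_mem_closedBall z hr0.le θ)
  have hsphereU : sphere z r ⊆ U := fun ζ hζ => hrU (sphere_subset_closedBall hζ)
  have contθ : ∀ y, Continuous fun θ : ℝ => f (circleMap z r θ) y := fun y =>
    (hol y).continuousOn.comp_continuous (continuous_circleMap z r) hmemU
  set c : X → ℝ := fun y => ∫ θ in (0:ℝ)..(2*π), ‖f (circleMap z r θ) y‖ with hc
  have intθ : ∀ y, IntervalIntegrable (fun θ => ‖f (circleMap z r θ) y‖) volume 0 (2*π) :=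
    fun y => ((contθ y).norm).intervalIntegrable 0 (2*π)
  have cnn : ∀ y, 0 ≤ c y := fun y =>
    intervalIntegral.integral_nonneg (by positivity) fun θ _ => norm_nonneg _
  -- partial sum bound
  have hpartial : ∀ s : Finset X, ∑ y ∈ s, c y * φ y ≤ 2*π*K := by
    intro s
    have h1 : ∀ y ∈ s, IntervalIntegrable
        (fun θ => ‖f (circleMap z r θ) y‖ * φ y) volume 0 (2*π) :=
      fun y _ => (intθ y).mul_const _
    have hcontSum : Continuous fun θ => ∑ y ∈ s, ‖f (circleMap z r θ) y‖ * φ y :=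
      continuous_finset_sum s fun y _ => ((contθ y).norm).mul continuous_const
    calc ∑ y ∈ s, c y * φ y
        = ∫ θ in (0:ℝ)..(2*π), ∑ y ∈ s, ‖f (circleMap z r θ) y‖ * φ y := by
          rw [intervalIntegral.integral_finset_sum h1]
          exact Finset.sum_congr rfl fun y _ => by
            rw [intervalIntegral.integral_mul_const]
      _ ≤ ∫ _ in (0:ℝ)..(2*π), K := by
          refine intervalIntegral.integral_mono_on (by positivity)
            (hcontSum.intervalIntegrable 0 (2*π)) intervalIntegrable_const ?_
          intro θ _
          exact le_trans (Summable.sum_le_tsum s (fun y _ => mul_nonneg (norm_nonneg _) (hφ y).le)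
            (hsum _ (hmemU θ))) (hK _ (hmemU θ))
      _ = 2*π*K := by rw [intervalIntegral.integral_const, smul_eq_mul]; ring
  have hsummc : Summable fun y => c y * φ y :=
    summable_of_sum_le (fun y => mul_nonneg (cnn y) (hφ y).le) hpartial
  have htsum_c : ∑' y, c y * φ y ≤ 2*π*K := Summable.tsum_le_of_sum_le hsummc hpartial
  -- general bound for circle integrals of kernel * f
  have keybound : ∀ (k : ℂ → ℂ) (B : ℝ) (y : X),
      (∀ ζ ∈ sphere z r, ‖k ζ‖ ≤ B) →
      ‖∮ ζ in C(z, r), k ζ * f ζ y‖ ≤ r * B * c y := by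
    intro k B y hB
    have hB0 : 0 ≤ B :=
      le_trans (norm_nonneg _) (hB _ (circleMap_mem_sphere z hr0.le 0))
    have hgint : IntervalIntegrable (fun θ => r * B * ‖f (circleMap z r θ) y‖)
        volume 0 (2*π) := (continuous_const.mul ((contθ y).norm)).intervalIntegrable 0 (2*π)
    rw [circleIntegral]
    refine le_trans (intervalIntegral.norm_integral_le_abs_of_norm_le
      (g := fun θ => r * B * ‖f (circleMap z r θ) y‖) ?_ hgint) ?_
    · filter_upwards with θ
      have : ‖deriv (circleMap z r) θ • (k (circleMap z r θ) * f (circleMap z r θ) y)‖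
          = r * (‖k (circleMap z r θ)‖ * ‖f (circleMap z r θ) y‖) := by
        simp [norm_smul, deriv_circleMap, abs_of_pos hr0, mul_assoc]
      rw [this, mul_assoc]
      refine mul_le_mul_of_nonneg_left ?_ hr0.le
      exact mul_le_mul_of_nonneg_right (hB _ (circleMap_mem_sphere z hr0.le θ)) (norm_nonneg _)
    · rw [intervalIntegral.integral_const_mul, _root_.abs_of_nonneg (mul_nonneg (mul_nonneg hr0.le hB0) (cnn y))]
  -- sphere facts
  have hsph : ∀ ζ ∈ sphere z r, ‖ζ - z‖ = r := fun ζ hζ => mem_sphere_iff_norm.1 hζ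
  have hne_z : ∀ ζ ∈ sphere z r, ζ ≠ z := by
    intro ζ hζ h
    have h2 := hsph ζ hζ
    rw [h, sub_self, norm_zero] at h2
    exact hr0.ne' h2.symm
  have hdist : ∀ w ∈ ball z (r/2), ∀ ζ ∈ sphere z r, r/2 ≤ ‖ζ - w‖ := by
    intro w hw ζ hζ
    have h1 : ‖w - z‖ < r/2 := by rwa [mem_ball, dist_eq_norm] at hw
    have h2 : ‖ζ - z‖ = r := hsph ζ hζ
    have h3 : ‖ζ - z‖ ≤ ‖ζ - w‖ + ‖w - z‖ := by
      calc ‖ζ - z‖ = ‖(ζ - w) + (w - z)‖ := by rw [sub_add_sub_cancel]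
        _ ≤ ‖ζ - w‖ + ‖w - z‖ := norm_add_le _ _
    linarith
  have hne_w : ∀ w ∈ ball z (r/2), ∀ ζ ∈ sphere z r, ζ ≠ w := by
    intro w hw ζ hζ h
    have h2 := hdist w hw ζ hζ
    rw [h, sub_self, norm_zero] at h2
    linarith
  -- definition of g
  set g : X → ℂ := fun y => (2*π*Complex.I : ℂ)⁻¹ * ∮ ζ in C(z, r), ((ζ - z)^2)⁻¹ * f ζ y
    with hgdef
  have h2pinorm : ‖(2*π*Complex.I : ℂ)⁻¹‖ = (2*π)⁻¹ := by
    rw [norm_inv]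
    simp [map_mul, Complex.norm_I, Complex.norm_real,
      _root_.abs_of_pos Real.pi_pos]
  have hkg : ∀ ζ ∈ sphere z r, ‖(((ζ - z)^2)⁻¹ : ℂ)‖ ≤ (r^2)⁻¹ := by
    intro ζ hζ
    rw [norm_inv, norm_pow, hsph ζ hζ]
  have hgbound : ∀ y, ‖g y‖ ≤ (2*π)⁻¹ * (r * (r^2)⁻¹ * c y) := by
    intro y
    rw [hgdef]
    rw [norm_mul, h2pinorm]
    exact mul_le_mul_of_nonneg_left (keybound _ _ y hkg) (by positivity)
  have hsummg : Summable fun y => ‖g y‖ * φ y := by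
    refine Summable.of_nonneg_of_le (fun y => mul_nonneg (norm_nonneg _) (hφ y).le)
      (fun y => ?_) (hsummc.mul_left ((2*π)⁻¹ * (r * (r^2)⁻¹)))
    calc ‖g y‖ * φ y ≤ ((2*π)⁻¹ * (r * (r^2)⁻¹ * c y)) * φ y :=
          mul_le_mul_of_nonneg_right (hgbound y) (hφ y).le
      _ = (2*π)⁻¹ * (r * (r^2)⁻¹) * (c y * φ y) := by ring
  refine ⟨g, hsummg, ?_⟩
  -- integrability helpers
  have contf : ∀ y, ContinuousOn (fun ζ => f ζ y) (sphere z r) := fun y =>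
    (hol y).continuousOn.mono hsphereU
  have cint : ∀ (k : ℂ → ℂ) (y : X), ContinuousOn k (sphere z r) →
      CircleIntegrable (fun ζ => k ζ * f ζ y) z r := fun k y hk =>
    (hk.mul (contf y)).circleIntegrable hr0.le
  have contk3 : ContinuousOn (fun ζ : ℂ => ((ζ - z)^2)⁻¹) (sphere z r) :=
    ContinuousOn.inv₀ ((continuousOn_id.sub continuousOn_const).pow 2)
      (fun ζ hζ => pow_ne_zero 2 (sub_ne_zero.2 (hne_z ζ hζ)))
  -- the key identity
  have hker : ∀ w ∈ ball z (r/2), ∀ y,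
      f w y - f z y - (w - z) * g y =
      (2*π*Complex.I : ℂ)⁻¹ *
        ∮ ζ in C(z, r), ((ζ - w)⁻¹ - (ζ - z)⁻¹ - (w - z) * ((ζ - z)^2)⁻¹) * f ζ y := by
    intro w hw y
    have hdc : DiffContOnCl ℂ (fun ζ => f ζ y) (ball z r) :=
      (hol y).diffContOnCl_ball hrU
    have hwball : w ∈ ball z r := ball_subset_ball (by linarith) hw
    have contkw : ContinuousOn (fun ζ : ℂ => (ζ - w)⁻¹) (sphere z r) :=
      ContinuousOn.inv₀ (continuousOn_id.sub continuousOn_const)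
        (fun ζ hζ => sub_ne_zero.2 (hne_w w hw ζ hζ))
    have contkz : ContinuousOn (fun ζ : ℂ => (ζ - z)⁻¹) (sphere z r) :=
      ContinuousOn.inv₀ (continuousOn_id.sub continuousOn_const)
        (fun ζ hζ => sub_ne_zero.2 (hne_z ζ hζ))
    have i1 := cint _ y contkw
    have i2 := cint _ y contkz
    have i3 := cint _ y contk3
    have i12 : CircleIntegrable
        (fun ζ => (ζ - w)⁻¹ * f ζ y - (ζ - z)⁻¹ * f ζ y) z r := by
      simpa only [sub_mul] using cint (fun ζ => (ζ - w)⁻¹ - (ζ - z)⁻¹) y (contkw.sub contkz)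
    have iC : CircleIntegrable (fun ζ => (w - z) • (((ζ - z)^2)⁻¹ * f ζ y)) z r := by
      simpa only [smul_eq_mul, mul_assoc] using
        cint (fun ζ => (w - z) * ((ζ - z)^2)⁻¹) y (continuousOn_const.mul contk3)
    have cw : (∮ ζ in C(z, r), (ζ - w)⁻¹ * f ζ y) = (2*π*Complex.I) * f w y := by
      simpa only [smul_eq_mul] using hdc.circleIntegral_sub_inv_smul hwball
    have cz : (∮ ζ in C(z, r), (ζ - z)⁻¹ * f ζ y) = (2*π*Complex.I) * f z y := by
      simpa only [smul_eq_mul] using hdc.circleIntegral_sub_inv_smul (mem_ball_self hr0)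
    have e : (fun ζ => ((ζ - w)⁻¹ - (ζ - z)⁻¹ - (w - z) * ((ζ - z)^2)⁻¹) * f ζ y)
        = fun ζ => ((ζ - w)⁻¹ * f ζ y - (ζ - z)⁻¹ * f ζ y)
            - (w - z) • (((ζ - z)^2)⁻¹ * f ζ y) := by
      funext ζ
      simp only [smul_eq_mul]
      ring
    have split : (∮ ζ in C(z, r), ((ζ - w)⁻¹ - (ζ - z)⁻¹ - (w - z) * ((ζ - z)^2)⁻¹) * f ζ y)
        = (2*π*Complex.I) * f w y - (2*π*Complex.I) * f z y
          - (w - z) * ∮ ζ in C(z, r), ((ζ - z)^2)⁻¹ * f ζ y := by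
      rw [e, circleIntegral.integral_sub i12 iC, circleIntegral.integral_sub i1 i2,
        circleIntegral.integral_smul, cw, cz, smul_eq_mul]
    rw [split, hgdef]
    have h2pi : (2*π*Complex.I : ℂ) ≠ 0 := by
      simp [Real.pi_ne_zero, Complex.I_ne_zero]
    field_simp
  -- main estimate
  have hest : ∀ w ∈ ball z (r/2), ∀ y,
      ‖f w y - f z y - (w - z) * g y‖ * φ y ≤
        ((2*π)⁻¹ * (r * (‖w - z‖^2 * ((r/2)⁻¹ * (r^2)⁻¹)))) * (c y * φ y) := by
    intro w hw y
    have hkbound : ∀ ζ ∈ sphere z r,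
        ‖(ζ - w)⁻¹ - (ζ - z)⁻¹ - (w - z) * ((ζ - z)^2)⁻¹‖ ≤
          ‖w - z‖^2 * ((r/2)⁻¹ * (r^2)⁻¹) := by
      intro ζ hζ
      have h1 : ζ - w ≠ 0 := sub_ne_zero.2 (hne_w w hw ζ hζ)
      have h2 : ζ - z ≠ 0 := sub_ne_zero.2 (hne_z ζ hζ)
      have hid : (ζ - w)⁻¹ - (ζ - z)⁻¹ - (w - z) * ((ζ - z)^2)⁻¹
          = (w - z)^2 * ((ζ - w)⁻¹ * ((ζ - z)^2)⁻¹) := by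
        field_simp
        ring
      rw [hid, norm_mul, norm_mul, norm_pow, norm_inv, norm_inv, norm_pow, hsph ζ hζ]
      have h3 : ‖ζ - w‖⁻¹ ≤ (r/2)⁻¹ := by
        apply inv_anti₀ (by linarith) (hdist w hw ζ hζ)
      gcongr
    calc ‖f w y - f z y - (w - z) * g y‖ * φ y
        = (‖(2*π*Complex.I : ℂ)⁻¹‖ *
            ‖∮ ζ in C(z, r), ((ζ - w)⁻¹ - (ζ - z)⁻¹ - (w - z) * ((ζ - z)^2)⁻¹) * f ζ y‖) * φ y :=
          by rw [hker w hw y, norm_mul]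
      _ ≤ ((2*π)⁻¹ * (r * (‖w - z‖^2 * ((r/2)⁻¹ * (r^2)⁻¹)) * c y)) * φ y := by
          rw [h2pinorm]
          exact mul_le_mul_of_nonneg_right
            (mul_le_mul_of_nonneg_left (keybound _ _ y hkbound) (by positivity)) (hφ y).le
      _ = ((2*π)⁻¹ * (r * (‖w - z‖^2 * ((r/2)⁻¹ * (r^2)⁻¹)))) * (c y * φ y) := by ring
  -- conclusion via squeeze
  set M : ℝ := (2*π*K) * ((2*π)⁻¹ * (r * ((r/2)⁻¹ * (r^2)⁻¹))) with hM
  have hQbound : ∀ w, w ∈ ball z (r/2) → w ≠ z →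
      (∑' y, ‖f w y - f z y - (w - z) * g y‖ * φ y) / ‖w - z‖ ≤ M * ‖w - z‖ := by
    intro w hw hwz
    have hwz' : 0 < ‖w - z‖ := by rw [norm_pos_iff, sub_ne_zero]; exact hwz
    rw [div_le_iff₀ hwz']
    have hsl : Summable fun y => ‖f w y - f z y - (w - z) * g y‖ * φ y :=
      Summable.of_nonneg_of_le (fun y => mul_nonneg (norm_nonneg _) (hφ y).le)
        (hest w hw) (hsummc.mul_left _)
    calc ∑' y, ‖f w y - f z y - (w - z) * g y‖ * φ y
        ≤ ∑' y, ((2*π)⁻¹ * (r * (‖w - z‖^2 * ((r/2)⁻¹ * (r^2)⁻¹)))) * (c y * φ y) :=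
          Summable.tsum_le_tsum (hest w hw) hsl (hsummc.mul_left _)
      _ = ((2*π)⁻¹ * (r * (‖w - z‖^2 * ((r/2)⁻¹ * (r^2)⁻¹)))) * ∑' y, c y * φ y :=
          tsum_mul_left
      _ ≤ ((2*π)⁻¹ * (r * (‖w - z‖^2 * ((r/2)⁻¹ * (r^2)⁻¹)))) * (2*π*K) :=
          mul_le_mul_of_nonneg_left htsum_c (by positivity)
      _ = M * ‖w - z‖ * ‖w - z‖ := by rw [hM]; ring_nf
  have hball_ev : ∀ᶠ w in nhdsWithin z {z}ᶜ, w ∈ ball z (r/2) ∧ w ≠ z := by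
    filter_upwards [nhdsWithin_le_nhds (ball_mem_nhds (ε := r/2) z (by positivity)),
      self_mem_nhdsWithin] with w h1 h2
    exact ⟨h1, by simpa using h2⟩
  have hb1 : ∀ᶠ w in nhdsWithin z {z}ᶜ,
      0 ≤ (∑' y, ‖f w y - f z y - (w - z) * g y‖ * φ y) / ‖w - z‖ :=
    Filter.Eventually.of_forall fun w => div_nonneg
      (tsum_nonneg fun y => mul_nonneg (norm_nonneg _) (hφ y).le) (norm_nonneg _)
  have hb2 : ∀ᶠ w in nhdsWithin z {z}ᶜ,
      (∑' y, ‖f w y - f z y - (w - z) * g y‖ * φ y) / ‖w - z‖ ≤ M * ‖w - z‖ := by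
    filter_upwards [hball_ev] with w hw
    exact hQbound w hw.1 hw.2
  have hb3 : Filter.Tendsto (fun w : ℂ => M * ‖w - z‖) (nhdsWithin z {z}ᶜ) (nhds 0) := by
    have hcont : Continuous fun w : ℂ => M * ‖w - z‖ := by fun_prop
    have := (hcont.tendsto z).mono_left (nhdsWithin_le_nhds (s := {z}ᶜ))
    simpa using this
  exact squeeze_zero' hb1 hb2 hb3
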